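/- For all k > 0, every language L ⊆ Σ*, and every k-test vector Z, if L ⊆ γ_k(Z) then γ_k(α_k(L)) ⊆ γ_k(Z); consequently γ_k(α_k(L)) is the smallest k-TSS language containing L. -/

import Mathlib

open Set
open scoped symmDiff

/-- A candidate `k`-test vector: a 4-tuple of sets of strings
(`I` prefixes, `F` suffixes, `T` segments, `C` short strings). -/
structure KTV (A : Type*) where
  I : Set (List A)
  F : Set (List A)
  T : Set (List A)
  C : Set (List A)

variable {A : Type*}

/-- `Z` is a genuine `k`-test vector. -/
def IsKTV (k : ℕ) (Z : KTV A) : Prop :=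
  Z.I ⊆ {w : List A | w.length = k - 1} ∧
  Z.F ⊆ {w : List A | w.length = k - 1} ∧
  Z.T ⊆ {w : List A | w.length = k} ∧
  Z.C ⊆ {w : List A | w.length < k} ∧
  Z.I ∩ Z.F = Z.C ∩ {w : List A | w.length = k - 1}

/-- The componentwise order `⊑` on `k`-test vectors. -/
def ktvLE (Z Z' : KTV A) : Prop :=
  Z.I ⊆ Z'.I ∧ Z.F ⊆ Z'.F ∧ Z.T ⊆ Z'.T ∧ Z.C ⊆ Z'.C

/-- The union `Z ⊔ Z'` of `k`-test vectors. -/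
def ktvUnion (Z Z' : KTV A) : KTV A :=
  ⟨Z.I ∪ Z'.I, Z.F ∪ Z'.F, Z.T ∪ Z'.T,
   Z.C ∪ Z'.C ∪ (Z.I ∩ Z'.F) ∪ (Z'.I ∩ Z.F)⟩

/-- The intersection `Z ⊓ Z'` of `k`-test vectors. -/
def ktvInter (Z Z' : KTV A) : KTV A :=
  ⟨Z.I ∩ Z'.I, Z.F ∩ Z'.F, Z.T ∩ Z'.T, Z.C ∩ Z'.C⟩

/-- The symmetric difference `Z △ Z'` of `k`-test vectors. -/
def ktvSymmDiff (Z Z' : KTV A) : KTV A :=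
  ⟨Z.I ∆ Z'.I, Z.F ∆ Z'.F, Z.T ∆ Z'.T,
   Z.C ∆ Z'.C ∆ (Z'.I ∩ Z.F) ∆ (Z.I ∩ Z'.F)⟩

/-- The least `k`-test vector `⊥ = ⟨∅,∅,∅,∅⟩`. -/
def ktvBot (A : Type*) : KTV A := ⟨∅, ∅, ∅, ∅⟩

/-- The greatest `k`-test vector `⊤ = ⟨Σ^{k-1}, Σ^{k-1}, Σ^k, Σ^{<k}⟩`. -/
def ktvTop (A : Type*) (k : ℕ) : KTV A :=
  ⟨{w | w.length = k - 1}, {w | w.length = k - 1},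
   {w | w.length = k}, {w | w.length < k}⟩

/-- `I_k(L)`: length-`(k-1)` prefixes of words of `L`. -/
def Ik (k : ℕ) (L : Set (List A)) : Set (List A) :=
  {u | u.length = k - 1 ∧ ∃ v, u ++ v ∈ L}

/-- `F_k(L)`: length-`(k-1)` suffixes of words of `L`. -/
def Fk (k : ℕ) (L : Set (List A)) : Set (List A) :=
  {w | w.length = k - 1 ∧ ∃ v, v ++ w ∈ L}

/-- `T_k(L)`: length-`k` substrings of words of `L`. -/
def Tk (k : ℕ) (L : Set (List A)) : Set (List A) :=
  {v | v.length = k ∧ ∃ u w, u ++ v ++ w ∈ L}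

/-- `C_k(L) = (L ∩ Σ^{<k-1}) ∪ (I_k(L) ∩ F_k(L))`. -/
def Ck (k : ℕ) (L : Set (List A)) : Set (List A) :=
  (L ∩ {w | w.length < k - 1}) ∪ (Ik k L ∩ Fk k L)

/-- `α_k(L) = ⟨I_k(L), F_k(L), T_k(L), C_k(L)⟩`. -/
def alphaK (k : ℕ) (L : Set (List A)) : KTV A :=
  ⟨Ik k L, Fk k L, Tk k L, Ck k L⟩

/-- `γ_k(Z) = C ∪ ((IΣ* ∩ Σ*F) \ (Σ*(Σ^k \ T)Σ*))`. -/
def gammaK (k : ℕ) (Z : KTV A) : Set (List A) :=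
  Z.C ∪ (({w | ∃ u ∈ Z.I, u <+: w} ∩ {w | ∃ u ∈ Z.F, u <:+ w}) \
    {w | ∃ v, v.length = k ∧ v ∉ Z.T ∧ v <:+: w})

/-- `L` is `k`-testable in the strict sense. -/
def IsKTSS (k : ℕ) (L : Set (List A)) : Prop :=
  ∃ Z : KTV A, IsKTV k Z ∧ gammaK k Z = L

/-- The cardinality `|Z| = |I| + |F| + |T| + |C ∩ Σ^{<k-1}|` of a `k`-test vector. -/
noncomputable def ktvCard (k : ℕ) (Z : KTV A) : ℕ :=
  Z.I.ncard + Z.F.ncard + Z.T.ncard + (Z.C ∩ {w : List A | w.length < k - 1}).ncard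

/-!
`γ_k` is monotone for the componentwise order on test vectors, and `α_k(L)` lies componentwise
below every `k`-test vector `Z` with `L ⊆ γ_k(Z)`: the length-`(k-1)` prefix and suffix and every
length-`k` factor of a word of `γ_k(Z)` of length at least `k - 1` are allowed by `Z`. For the words
of `γ_k(Z)` that only enter through `C`, this is the condition `I ∩ F = C ∩ Σ^{k-1}`.
-/

section

variable {k : ℕ} {Z : KTV A} {w : List A}

lemma mem_gammaK :
    w ∈ gammaK k Z ↔ w ∈ Z.C ∨
      ((∃ u ∈ Z.I, u <+: w) ∧ (∃ u ∈ Z.F, u <:+ w) ∧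
        ¬ ∃ v : List A, v.length = k ∧ v ∉ Z.T ∧ v <:+: w) := by
  simp [gammaK, and_assoc]

lemma gammaK_mono {Z' : KTV A} (h : ktvLE Z Z') : gammaK k Z ⊆ gammaK k Z' := by
  obtain ⟨hI, hF, hT, hC⟩ := h
  intro w hw
  rw [mem_gammaK] at hw ⊢
  rcases hw with hw | ⟨⟨u, hu, hup⟩, ⟨f, hf, hfs⟩, hbad⟩
  · exact Or.inl (hC hw)
  · refine Or.inr ⟨⟨u, hI hu, hup⟩, ⟨f, hF hf, hfs⟩, ?_⟩
    rintro ⟨v, hv, hvT, hvw⟩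
    exact hbad ⟨v, hv, fun h => hvT (hT h), hvw⟩

namespace IsKTV

variable (hZ : IsKTV k Z)
include hZ

lemma mem_I_inter_F_of_mem_C (hw : w ∈ Z.C) (hlen : k - 1 ≤ w.length) :
    w.length = k - 1 ∧ w ∈ Z.I ∩ Z.F := by
  have hlen' : w.length = k - 1 := by
    have hshort : w.length < k := hZ.2.2.2.1 hw
    omega
  exact ⟨hlen', hZ.2.2.2.2.superset ⟨hw, hlen'⟩⟩

lemma take_mem_I (hw : w ∈ gammaK k Z) (hlen : k - 1 ≤ w.length) : w.take (k - 1) ∈ Z.I := by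
  rcases mem_gammaK.1 hw with hC | ⟨⟨u, hu, hup⟩, -, -⟩
  · obtain ⟨hwlen, hwI, -⟩ := hZ.mem_I_inter_F_of_mem_C hC hlen
    rwa [List.take_of_length_le hwlen.le]
  · have hulen : u.length = k - 1 := hZ.1 hu
    rwa [List.prefix_iff_eq_take.1 hup, hulen] at hu

lemma drop_mem_F (hw : w ∈ gammaK k Z) (hlen : k - 1 ≤ w.length) :
    w.drop (w.length - (k - 1)) ∈ Z.F := by
  rcases mem_gammaK.1 hw with hC | ⟨-, ⟨u, hu, hus⟩, -⟩
  · obtain ⟨hwlen, -, hwF⟩ := hZ.mem_I_inter_F_of_mem_C hC hlen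
    rwa [hwlen, Nat.sub_self, List.drop_zero]
  · have hulen : u.length = k - 1 := hZ.2.1 hu
    rwa [List.suffix_iff_eq_drop.1 hus, hulen] at hu

lemma mem_T_of_infix (hw : w ∈ gammaK k Z) {v : List A} (hv : v.length = k) (hvw : v <:+: w) :
    v ∈ Z.T := by
  rcases mem_gammaK.1 hw with hC | ⟨-, -, hbad⟩
  · have hshort : w.length < k := hZ.2.2.2.1 hC
    have := hvw.length_le
    omega
  · by_contra hvT
    exact hbad ⟨v, hv, hvT, hvw⟩

lemma alphaK_le {L : Set (List A)} (hL : L ⊆ gammaK k Z) : ktvLE (alphaK k L) Z := by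
  have hI : Ik k L ⊆ Z.I := by
    rintro u ⟨hu, v, huv⟩
    have := hZ.take_mem_I (hL huv) (by simp [hu])
    rwa [List.take_left' hu] at this
  have hF : Fk k L ⊆ Z.F := by
    rintro u ⟨hu, v, hvu⟩
    have := hZ.drop_mem_F (hL hvu) (by simp [hu])
    rwa [List.length_append, hu, Nat.add_sub_cancel, List.drop_left' rfl] at this
  refine ⟨hI, hF, ?_, ?_⟩
  · rintro v ⟨hv, a, b, hL'⟩
    exact hZ.mem_T_of_infix (hL hL') hv ⟨a, b, rfl⟩
  · rintro w (⟨hwL, hwlen⟩ | ⟨hwI, hwF⟩)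
    · rcases mem_gammaK.1 (hL hwL) with hC | ⟨⟨u, hu, hup⟩, -, -⟩
      · exact hC
      · have hulen : u.length = k - 1 := hZ.1 hu
        have hwlen' : w.length < k - 1 := hwlen
        have := hup.length_le
        omega
    · exact (hZ.2.2.2.2.subset ⟨hI hwI, hF hwF⟩).1

end IsKTV

lemma subset_gammaK_alphaK (L : Set (List A)) : L ⊆ gammaK k (alphaK k L) := by
  intro w hw
  rw [mem_gammaK]
  rcases lt_or_ge w.length (k - 1) with hlen | hlen
  · exact Or.inl (Or.inl ⟨hw, hlen⟩)
  · refine Or.inr ⟨⟨w.take (k - 1), ⟨by simp [hlen], w.drop (k - 1), by simp [hw]⟩,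
      List.take_prefix _ _⟩, ⟨w.drop (w.length - (k - 1)), ⟨by rw [List.length_drop]; omega,
      w.take (w.length - (k - 1)), by simp [hw]⟩, List.drop_suffix _ _⟩, ?_⟩
    rintro ⟨v, hv, hvT, a, b, hab⟩
    exact hvT ⟨hv, a, b, hab ▸ hw⟩

lemma isKTV_alphaK (hk : 0 < k) (L : Set (List A)) : IsKTV k (alphaK k L) := by
  refine ⟨fun u hu => hu.1, fun u hu => hu.1, fun u hu => hu.1, ?_, ?_⟩
  · rintro w (⟨-, hwlen⟩ | ⟨⟨hwlen, -⟩, -⟩)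
    · exact hwlen.trans_le (Nat.sub_le k 1)
    · show w.length < k
      omega
  · ext w
    constructor
    · rintro ⟨hI, hF⟩
      exact ⟨Or.inr ⟨hI, hF⟩, hI.1⟩
    · rintro ⟨⟨-, hshort⟩ | h, hlen⟩
      · exact absurd (hlen : w.length = k - 1) (hshort : w.length < k - 1).ne
      · exact h

end

theorem stmt8_general {A : Type*} (k : ℕ) (hk : 0 < k)
    (L : Set (List A)) :
    (∀ Z : KTV A, IsKTV k Z → L ⊆ gammaK k Z → gammaK k (alphaK k L) ⊆ gammaK k Z) ∧
    IsKTSS k (gammaK k (alphaK k L)) ∧ L ⊆ gammaK k (alphaK k L) :=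
  ⟨fun _ hZ hL => gammaK_mono (hZ.alphaK_le hL), ⟨alphaK k L, isKTV_alphaK hk L, rfl⟩,
    subset_gammaK_alphaK L⟩

/-- `γ_k(α_k(L))` is the smallest `k`-TSS language containing `L`. -/
theorem stmt8 {A : Type*} [Fintype A] (k : ℕ) (hk : 0 < k)
    (L : Set (List A)) :
    (∀ Z : KTV A, IsKTV k Z → L ⊆ gammaK k Z → gammaK k (alphaK k L) ⊆ gammaK k Z) ∧
    IsKTSS k (gammaK k (alphaK k L)) ∧ L ⊆ gammaK k (alphaK k L) :=
  stmt8_general k hk L
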